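/- Under Algorithm 2 with rigid movements in FSYNC and no crash: if the two robots are at distance d ≤ 1 with d > 0, then after one round they are at distance 1 + d > 1, and after one more round they gather (distance 0). If d > 1, they gather in one round. -/

import Mathlib

/-- One round of Algorithm 2 (FSYNC, rigid, no crash): both robots move.
If the distance exceeds 1, both go to the midpoint; otherwise the right robot
goes to the left robot's position and the left robot goes to the point at
distance 1 to the right of the right robot. -/
noncomputable def step2 (c : ℝ × ℝ) : ℝ × ℝ :=
  let l := min c.1 c.2
  let r := max c.1 c.2
  if 1 < r - l then ((l + r) / 2, (l + r) / 2) else (r + 1, l)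

theorem step2_fst_eq_snd_of_one_lt_abs_sub (c : ℝ × ℝ) (h : 1 < |c.1 - c.2|) :
    (step2 c).1 = (step2 c).2 := by
  rw [← max_sub_min_eq_abs'] at h
  simp only [step2, if_pos h]

theorem step2_of_le_of_sub_le_one {a b : ℝ} (hab : a ≤ b) (h : b - a ≤ 1) :
    step2 (a, b) = (b + 1, a) := by
  simp only [step2, min_eq_left hab, max_eq_right hab, if_neg h.not_gt]

/-- Algorithm 2, FSYNC, rigid, no crash: if `0 < b - a ≤ 1` the robots are at
distance `1 + (b - a) > 1` after one round and gather after one more round;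
if `b - a > 1` they gather in one round. -/
theorem algo2_no_crash (a b : ℝ) (hab : a < b) :
    (b - a ≤ 1 →
      step2 (a, b) = (b + 1, a) ∧
      (b + 1) - a = 1 + (b - a) ∧ 1 < (b + 1) - a ∧
      (step2 (step2 (a, b))).1 = (step2 (step2 (a, b))).2) ∧
    (1 < b - a → (step2 (a, b)).1 = (step2 (a, b)).2) := by
  refine ⟨fun h => ?_, fun h => ?_⟩
  · have hstep : step2 (a, b) = (b + 1, a) := step2_of_le_of_sub_le_one hab.le h
    have hfar : 1 < (b + 1) - a := by linarith
    refine ⟨hstep, by ring, hfar, ?_⟩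
    rw [hstep]
    exact step2_fst_eq_snd_of_one_lt_abs_sub _ (hfar.trans_le (le_abs_self _))
  · exact step2_fst_eq_snd_of_one_lt_abs_sub _ (by rwa [abs_sub_comm, abs_of_pos (by linarith)])
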